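/- The number of multi-Catalan tableaux of size n whose diagonal word contains zero x's is the Catalan number C_{n+1} = (1/(n+2)) * binomial(2n+2, n+1). -/

import Mathlib

inductive MSym : Type
  | a | b | x
deriving DecidableEq

inductive Letter : Type
  | D | E | A
deriving DecidableEq

/-- The content of the diagonal box of row `i` in a staircase filling of size `n`
(boxes `(i, j)` with `i + j < n`; the diagonal box of row `i` is `(i, n-1-i)`). -/
def diagRow (n : ℕ) (F : Fin n → Fin n → Option MSym) (i : Fin n) : Option MSym :=
  F i ⟨n - 1 - (i : ℕ), by have := i.isLt; omega⟩

def diagCol (n : ℕ) (F : Fin n → Fin n → Option MSym) (j : Fin n) : Option MSym :=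
  F ⟨n - 1 - (j : ℕ), by have := j.isLt; omega⟩ j

/-- A box is forced to be empty if there is a `β` to its right in its row or an `α`
below it in its column. -/
def ForcedEmpty (n : ℕ) (F : Fin n → Fin n → Option MSym) (i j : Fin n) : Prop :=
  (∃ j' : Fin n, j < j' ∧ F i j' = some MSym.b) ∨ (∃ i' : Fin n, i < i' ∧ F i' j = some MSym.a)

/-- A multi-Catalan tableau of size `n`: every box on the diagonal is filled (α, β or x);
a box left of a β in its row or above an α in its column is empty; a non-forced box in a
D-row and E-column contains α or β; in a D-row and A-column contains β; in an A-row and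
E-column contains α; every other box is empty. -/
def IsMCT (n : ℕ) (F : Fin n → Fin n → Option MSym) : Prop :=
  (∀ i j : Fin n, n ≤ (i : ℕ) + (j : ℕ) → F i j = none) ∧
  (∀ i : Fin n, diagRow n F i ≠ none) ∧
  (∀ i j : Fin n, (i : ℕ) + (j : ℕ) < n - 1 →
    (ForcedEmpty n F i j → F i j = none) ∧
    (¬ ForcedEmpty n F i j →
      match diagRow n F i, diagCol n F j with
      | some MSym.a, some MSym.b => F i j = some MSym.a ∨ F i j = some MSym.b
      | some MSym.a, some MSym.x => F i j = some MSym.b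
      | some MSym.x, some MSym.b => F i j = some MSym.a
      | _, _ => F i j = none))

def symToLetter : Option MSym → Letter
  | some MSym.a => Letter.D
  | some MSym.b => Letter.E
  | _ => Letter.A

/-- The type of a tableau: the word in {D, E, A} read off the diagonal from top to bottom. -/
def typeWord (n : ℕ) (F : Fin n → Fin n → Option MSym) : List Letter :=
  List.ofFn fun i : Fin n => symToLetter (diagRow n F i)

def countSym (n : ℕ) (F : Fin n → Fin n → Option MSym) (s : MSym) : ℕ :=
  (Finset.univ.filter fun p : Fin n × Fin n => F p.1 p.2 = some s).card

/-- The weight of a tableau: the product of all its α's and β's. -/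
noncomputable def wt (n : ℕ) (α β : ℝ) (F : Fin n → Fin n → Option MSym) : ℝ :=
  α ^ countSym n F MSym.a * β ^ countSym n F MSym.b

/-- The weight generating function of a word: the sum of the weights over all
multi-Catalan tableaux of that type. -/
noncomputable def wordWeight (α β : ℝ) (X : List Letter) : ℝ :=
  ∑ᶠ T : {F : Fin X.length → Fin X.length → Option MSym //
      IsMCT X.length F ∧ typeWord X.length F = X}, wt X.length α β T.1

/-!
Without an `x` on the diagonal, every box off the diagonal of a tableau is either forced to be
empty or holds `α` or `β`. Let `t n` be the number of such tableaux of size `n`. Deleting the top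
row leaves a tableau `H` of size `n`, and the top row is determined by where its `β` sits: on the
diagonal, nowhere, or above a column of `H` that contains no `α`. Thus
`t (n + 1) = 2 t n + ∑ c, #{H | column c of H is α-free}`. If column `c` is `α`-free, every row
meeting it contains a `β` no further from the diagonal, which blocks the rest of the row, so `H`
is the block sum of tableaux of sizes `c + 1` and `n - 1 - c`. Transposing the first block and
exchanging `α` with `β` turns its `α`-free column into a `β`-free top row, and such tableaux of
size `c + 1` correspond to arbitrary ones of size `c`. Hence
`t (n + 1) = 2 t n + ∑ c, t c t (n - 1 - c)`, the Catalan recursion for `t n = C (n + 1)`.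
-/

instance : Fintype MSym :=
  ⟨{.a, .b, .x}, fun s => by cases s <;> simp⟩

def MSym.swap : MSym → MSym
  | .a => .b
  | .b => .a
  | .x => .x

theorem MSym.swap_swap (s : MSym) : s.swap.swap = s := by cases s <;> rfl

theorem MSym.map_swap_eq_some_iff {o : Option MSym} {s : MSym} :
    o.map MSym.swap = some s ↔ o = some s.swap := by
  rcases o with _ | ⟨_ | _ | _⟩ <;> cases s <;> simp [MSym.swap]

theorem MSym.option_eq_of_ne_x {o o' : Option MSym} (hx : o ≠ some .x) (hx' : o' ≠ some .x)
    (hnone : o = none ↔ o' = none) (hb : o = some .b ↔ o' = some .b) : o = o' := by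
  rcases o with _ | ⟨_ | _ | _⟩ <;> rcases o' with _ | ⟨_ | _ | _⟩ <;> simp_all

theorem sum_card_subtype_comm {α β : Type*} [Fintype α] [Fintype β] (R : α → β → Prop) :
    ∑ a, Nat.card {b // R a b} = ∑ b, Nat.card {a // R a b} := by
  rw [← Nat.card_sigma, ← Nat.card_sigma,
    ← Nat.card_congr (Equiv.subtypeProdEquivSigmaSubtype R),
    ← Nat.card_congr (Equiv.subtypeProdEquivSigmaSubtype fun b a => R a b)]
  exact Nat.card_congr ((Equiv.prodComm α β).subtypeEquiv fun _ => Iff.rfl)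

/-- Box `(i, k)`, `i ≤ k < n`, is the staircase box in row `i` and column `n - 1 - k`: columns are
counted from the right, so the diagonal becomes `k = i`. -/
abbrev Filling := ℕ → ℕ → Option MSym

namespace Filling

variable {G H T O : Filling} {n m d i k : ℕ}

def Blocked (G : Filling) (i k : ℕ) : Prop :=
  (∃ k', i ≤ k' ∧ k' < k ∧ G i k' = some .b) ∨ (∃ i', i < i' ∧ i' ≤ k ∧ G i' k = some .a)

def SupportedIn (n : ℕ) (G : Filling) : Prop :=
  ∀ i k, k < i ∨ n ≤ k → G i k = none

structure IsTableau (n : ℕ) (G : Filling) : Prop where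
  supportedIn : G.SupportedIn n
  diag : ∀ i < n, G i i = some .a ∨ G i i = some .b
  eq_none_iff : ∀ i k, i < k → k < n → (G i k = none ↔ G.Blocked i k)
  ne_x : ∀ i k, G i k ≠ some .x

abbrev Tableau (n : ℕ) := {G : Filling // G.IsTableau n}

theorem blocked_congr {G' : Filling} (hrow : ∀ j, i ≤ j → j < k → G' i j = G i j)
    (hcol : ∀ j, i < j → j ≤ k → G' j k = G j k) : G'.Blocked i k ↔ G.Blocked i k := by
  unfold Blocked
  constructor <;> rintro (⟨j, h1, h2, h⟩ | ⟨j, h1, h2, h⟩)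
  exacts [.inl ⟨j, h1, h2, hrow j h1 h2 ▸ h⟩, .inr ⟨j, h1, h2, hcol j h1 h2 ▸ h⟩,
    .inl ⟨j, h1, h2, (hrow j h1 h2).symm ▸ h⟩, .inr ⟨j, h1, h2, (hcol j h1 h2).symm ▸ h⟩]

theorem IsTableau.eq_none_of_blocked (hG : G.IsTableau n) (hk : k < n) (hb : G.Blocked i k) :
    G i k = none := by
  have hik : i < k := by rcases hb with ⟨j, _, _, _⟩ | ⟨j, _, _, _⟩ <;> omega
  exact (hG.eq_none_iff i k hik hk).2 hb

theorem IsTableau.cell (hG : G.IsTableau n) (hik : i < k) (hk : k < n) :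
    (G.Blocked i k → G i k = none) ∧ (¬G.Blocked i k → G i k = some .a ∨ G i k = some .b) := by
  refine ⟨(hG.eq_none_iff i k hik hk).2, fun hb => ?_⟩
  have hnone := mt (hG.eq_none_iff i k hik hk).1 hb
  have hx := hG.ne_x i k
  rcases h : G i k with _ | ⟨_ | _ | _⟩ <;> simp_all

theorem isTableau_of_cell (hG : G.SupportedIn n)
    (hdiag : ∀ i < n, G i i = some .a ∨ G i i = some .b)
    (hcell : ∀ i k, i < k → k < n →
      (G.Blocked i k → G i k = none) ∧ (¬G.Blocked i k → G i k = some .a ∨ G i k = some .b)) :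
    G.IsTableau n where
  supportedIn := hG
  diag := hdiag
  eq_none_iff i k hik hk := by
    refine ⟨fun hnone => by_contra fun hb => ?_, (hcell i k hik hk).1⟩
    rcases (hcell i k hik hk).2 hb with h | h <;> simp [h] at hnone
  ne_x i k := by
    rcases lt_trichotomy i k with hik | rfl | hik
    · by_cases hk : k < n
      · by_cases hb : G.Blocked i k
        · simp [(hcell i k hik hk).1 hb]
        · rcases (hcell i k hik hk).2 hb with h | h <;> simp [h]
      · simp [hG i k (by omega)]
    · by_cases hi : i < n
      · rcases hdiag i hi with h | h <;> simp [h]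
      · simp [hG i i (by omega)]
    · simp [hG i k (by omega)]

instance (n : ℕ) : Finite (Tableau n) := by
  refine Finite.of_injective (fun G (i k : Fin n) => G.1 i k) fun G G' h => ?_
  refine Subtype.ext <| funext₂ fun i k => ?_
  by_cases hik : i < n ∧ k < n
  · exact congr_fun₂ h ⟨i, hik.1⟩ ⟨k, hik.2⟩
  · rw [G.2.supportedIn i k (by omega), G'.2.supportedIn i k (by omega)]

noncomputable instance (n : ℕ) : Fintype (Tableau n) := Fintype.ofFinite _

theorem card_tableau_zero : Nat.card (Tableau 0) = 1 := by
  refine Nat.card_eq_one_iff_unique.2 ⟨⟨fun G G' => ?_⟩, ⟨⟨fun _ _ => none, ?_⟩⟩⟩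
  · exact Subtype.ext <| funext₂ fun i k =>
      (G.2.supportedIn i k (by omega)).trans (G'.2.supportedIn i k (by omega)).symm
  · exact ⟨fun _ _ _ => rfl, nofun, fun _ _ _ h => absurd h (by omega), fun _ _ => nofun⟩

def translate (d : ℕ) (G : Filling) : Filling := fun i k => G (i + d) (k + d)

def truncate (m : ℕ) (G : Filling) : Filling := fun i k => if k < m then G i k else none

def glue (m : ℕ) (T O : Filling) : Filling := fun i k =>
  if k < m then T i k else if m ≤ i then O (i - m) (k - m) else none

theorem blocked_translate_iff (d : ℕ) :
    (G.translate d).Blocked i k ↔ G.Blocked (i + d) (k + d) := by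
  unfold Blocked translate
  constructor
  · rintro (⟨j, h1, h2, h⟩ | ⟨j, h1, h2, h⟩)
    exacts [.inl ⟨j + d, by omega, by omega, h⟩, .inr ⟨j + d, by omega, by omega, h⟩]
  · rintro (⟨j, h1, h2, h⟩ | ⟨j, h1, h2, h⟩)
    · exact .inl ⟨j - d, by omega, by omega, by rwa [Nat.sub_add_cancel (by omega)]⟩
    · exact .inr ⟨j - d, by omega, by omega, by rwa [Nat.sub_add_cancel (by omega)]⟩

theorem IsTableau.translate (hG : G.IsTableau (n + d)) : (G.translate d).IsTableau n where
  supportedIn i k h := hG.supportedIn _ _ (by omega)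
  diag i hi := hG.diag _ (by omega)
  eq_none_iff i k hik hk :=
    (hG.eq_none_iff _ _ (by omega) (by omega)).trans (blocked_translate_iff d).symm
  ne_x i k := hG.ne_x _ _

theorem IsTableau.truncate (hG : G.IsTableau n) (hm : m ≤ n) : (G.truncate m).IsTableau m where
  supportedIn i k h := by
    unfold Filling.truncate
    split_ifs <;> first | rfl | exact hG.supportedIn _ _ (by omega)
  diag i hi := by simpa [Filling.truncate, hi] using hG.diag i (by omega)
  eq_none_iff i k hik hk := by
    rw [blocked_congr (G := G) (fun j _ _ => if_pos (by omega)) (fun j _ _ => if_pos hk)]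
    simpa [Filling.truncate, hk] using hG.eq_none_iff i k hik (by omega)
  ne_x i k := by
    unfold Filling.truncate
    split_ifs <;> simp [hG.ne_x]

theorem truncate_glue (hT : T.SupportedIn m) : (glue m T O).truncate m = T := by
  funext i k
  unfold truncate glue
  split_ifs with hk
  · rfl
  · exact (hT i k (by omega)).symm

theorem translate_glue : (glue m T O).translate m = O := by
  funext i k
  simp [translate, glue]

theorem glue_truncate_translate (hcross : ∀ i k, i < m → m ≤ k → G i k = none) :
    glue m (G.truncate m) (G.translate m) = G := by
  funext i k
  unfold glue truncate translate
  split_ifs with h1 h2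
  · rfl
  · congr 1 <;> omega
  · exact (hcross i k (by omega) (by omega)).symm

theorem IsTableau.glue (hT : T.IsTableau m) (hO : O.IsTableau n)
    (hβ : ∀ i < m, ∃ j < m, T i j = some .b) : (glue m T O).IsTableau (m + n) where
  supportedIn i k h := by
    unfold Filling.glue
    split_ifs <;>
      first | rfl | exact hT.supportedIn _ _ (by omega) | exact hO.supportedIn _ _ (by omega)
  diag i hi := by
    unfold Filling.glue
    split_ifs with h1 h2
    · exact hT.diag i h1
    · exact hO.diag _ (by omega)
    · omega
  eq_none_iff i k hik hk := by
    by_cases hkm : k < m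
    · rw [blocked_congr (G := T) (fun j _ _ => if_pos (by omega)) (fun j _ _ => if_pos hkm)]
      simpa [Filling.glue, hkm] using hT.eq_none_iff i k hik hkm
    by_cases him : m ≤ i
    · have := blocked_translate_iff (G := Filling.glue m T O) (i := i - m) (k := k - m) m
      rw [translate_glue, Nat.sub_add_cancel him, Nat.sub_add_cancel (by omega)] at this
      rw [← this]
      simpa [Filling.glue, hkm, him] using hO.eq_none_iff (i - m) (k - m) (by omega) (by omega)
    obtain ⟨j, hj, hb⟩ := hβ i (by omega)
    have hij : i ≤ j := by
      by_contra h
      rw [hT.supportedIn i j (by omega)] at hb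
      cases hb
    simp only [Filling.glue, hkm, him, if_false, true_iff]
    exact .inl ⟨j, hij, by omega, by simpa [Filling.glue, hj] using hb⟩
  ne_x i k := by
    unfold Filling.glue
    split_ifs <;> simp [hT.ne_x, hO.ne_x]

theorem IsTableau.eq_none_of_exists_eq_b (hG : G.IsTableau n)
    (hβ : ∀ i < m, ∃ j < m, G i j = some .b) (hi : i < m) (hk : m ≤ k) : G i k = none := by
  obtain ⟨j, hj, hb⟩ := hβ i hi
  have hij : i ≤ j := by
    by_contra h
    rw [hG.supportedIn i j (by omega)] at hb
    cases hb
  by_cases hkn : k < n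
  · exact hG.eq_none_of_blocked hkn (.inl ⟨j, hij, by omega, hb⟩)
  · exact hG.supportedIn i k (by omega)

/-- If every row of the top-left block of size `m` contains a `β`, the other boxes of these rows
are blocked, so the tableau is the block sum of two tableaux. -/
def blockEquiv (m k : ℕ) (P : Filling → Prop)
    (hP : ∀ T : Filling, T.IsTableau m → P T → ∀ i < m, ∃ j < m, T i j = some .b) :
    {G : Tableau (m + k) // P (G.1.truncate m)} ≃ {T : Tableau m // P T.1} × Tableau k where
  toFun G := (⟨⟨_, G.1.2.truncate (by omega)⟩, G.2⟩,
    ⟨_, IsTableau.translate (d := m) (by rw [add_comm]; exact G.1.2)⟩)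
  invFun x := ⟨⟨glue m x.1.1.1 x.2.1, x.1.1.2.glue x.2.2 (hP _ x.1.1.2 x.1.2)⟩,
    by rw [truncate_glue x.1.1.2.supportedIn]; exact x.1.2⟩
  left_inv G := by
    refine Subtype.ext <| Subtype.ext <| glue_truncate_translate fun i k hi hk => ?_
    refine G.1.2.eq_none_of_exists_eq_b (fun i hi => ?_) hi hk
    obtain ⟨j, hj, hb⟩ := hP _ (G.1.2.truncate (by omega)) G.2 i hi
    exact ⟨j, hj, by simpa [truncate, hj] using hb⟩
  right_inv x := Prod.ext (Subtype.ext <| Subtype.ext <| truncate_glue x.1.1.2.supportedIn)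
    (Subtype.ext translate_glue)

/-- Transposition of the staircase, exchanging `α` and `β`: a `β` to the right of a box becomes
an `α` below the transposed box. -/
def flip (n : ℕ) (G : Filling) : Filling := fun i k =>
  if i ≤ k ∧ k < n then (G (n - 1 - k) (n - 1 - i)).map MSym.swap else none

theorem flip_flip (hG : G.SupportedIn n) : (G.flip n).flip n = G := by
  funext i k
  unfold flip
  by_cases h : i ≤ k ∧ k < n
  · rw [if_pos h, if_pos ⟨by omega, by omega⟩, Option.map_map,
      show n - 1 - (n - 1 - i) = i by omega, show n - 1 - (n - 1 - k) = k by omega]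
    cases G i k <;> simp [MSym.swap_swap]
  · rw [if_neg h, hG i k (by omega)]

theorem blocked_flip_iff (hik : i < k) (hk : k < n) :
    (G.flip n).Blocked i k ↔ G.Blocked (n - 1 - k) (n - 1 - i) := by
  unfold Blocked flip
  rw [or_comm]
  constructor
  · rintro (⟨j, h1, h2, h⟩ | ⟨j, h1, h2, h⟩)
    · rw [if_pos ⟨by omega, hk⟩, MSym.map_swap_eq_some_iff] at h
      exact .inl ⟨n - 1 - j, by omega, by omega, h⟩
    · rw [if_pos ⟨h1, by omega⟩, MSym.map_swap_eq_some_iff] at h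
      exact .inr ⟨n - 1 - j, by omega, by omega, h⟩
  · rintro (⟨j, h1, h2, h⟩ | ⟨j, h1, h2, h⟩)
    · refine .inl ⟨n - 1 - j, by omega, by omega, ?_⟩
      rw [if_pos ⟨by omega, hk⟩, MSym.map_swap_eq_some_iff, show n - 1 - (n - 1 - j) = j by omega]
      exact h
    · refine .inr ⟨n - 1 - j, by omega, by omega, ?_⟩
      rw [if_pos ⟨by omega, by omega⟩, MSym.map_swap_eq_some_iff,
        show n - 1 - (n - 1 - j) = j by omega]
      exact h

theorem IsTableau.flip (hG : G.IsTableau n) : (G.flip n).IsTableau n where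
  supportedIn i k h := if_neg (by omega)
  diag i hi := by
    rcases hG.diag (n - 1 - i) (by omega) with h | h <;> simp [Filling.flip, hi, h, MSym.swap]
  eq_none_iff i k hik hk := by
    rw [blocked_flip_iff hik hk, ← hG.eq_none_iff _ _ (by omega) (by omega)]
    simp [Filling.flip, hk, hik.le]
  ne_x i k := by
    unfold Filling.flip
    split_ifs
    · have := hG.ne_x (n - 1 - k) (n - 1 - i)
      rcases h : G (n - 1 - k) (n - 1 - i) with _ | ⟨_ | _ | _⟩ <;> simp_all [MSym.swap]
    · simp

def flipEquiv (n : ℕ) : Tableau n ≃ Tableau n where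
  toFun G := ⟨G.1.flip n, G.2.flip⟩
  invFun G := ⟨G.1.flip n, G.2.flip⟩
  left_inv G := Subtype.ext (flip_flip G.2.supportedIn)
  right_inv G := Subtype.ext (flip_flip G.2.supportedIn)

def AlphaFree (H : Filling) (c : ℕ) : Prop := ∀ i ≤ c, H i c ≠ some .a

def BetaFree (r : ℕ → Option MSym) : Prop := ∀ k, r k ≠ some .b

theorem betaFree_flip_iff {c : ℕ} : BetaFree (T.flip (c + 1) 0) ↔ T.AlphaFree c := by
  simp only [BetaFree, flip, Nat.zero_le, true_and, Nat.add_sub_cancel, Nat.sub_zero]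
  constructor
  · intro h i hi ha
    apply h (c - i)
    rw [if_pos (by omega), MSym.map_swap_eq_some_iff, show c - (c - i) = i by omega]
    exact ha
  · intro h j
    split_ifs with hj
    · rw [Ne, MSym.map_swap_eq_some_iff]
      exact h (c - j) (by omega)
    · simp

theorem IsTableau.exists_eq_b_of_alphaFree {c : ℕ} (hT : T.IsTableau (c + 1))
    (hc : T.AlphaFree c) : ∀ i < c + 1, ∃ j < c + 1, T i j = some .b := by
  intro i hi
  rcases (Nat.lt_succ_iff.1 hi).lt_or_eq with hic | rfl
  · rcases hT.cell hic (by omega) with ⟨hblocked, hfree⟩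
    by_cases hb : T.Blocked i c
    · rcases hb with ⟨j, -, hj, hb⟩ | ⟨i', -, hi', ha⟩
      exacts [⟨j, by omega, hb⟩, absurd ha (hc i' hi')]
    · exact ⟨c, by omega, (hfree hb).resolve_left (hc i hic.le)⟩
  · exact ⟨i, hi, (hT.diag i hi).resolve_left (hc i le_rfl)⟩

def cons (r : ℕ → Option MSym) (H : Filling) : Filling
  | 0, k => r k
  | _ + 1, 0 => none
  | i + 1, k + 1 => H i k

structure IsTopRow (n : ℕ) (H : Filling) (r : ℕ → Option MSym) : Prop where
  eq_none : ∀ k, n < k → r k = none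
  head : r 0 = some .a ∨ r 0 = some .b
  eq_none_iff : ∀ k < n,
    r (k + 1) = none ↔ (∃ j ≤ k, r j = some .b) ∨ ∃ i ≤ k, H i k = some .a
  ne_x : ∀ k, r k ≠ some .x

variable {r r' : ℕ → Option MSym}

theorem translate_cons : (cons r H).translate 1 = H := rfl

theorem cons_translate (hG : ∀ i, G (i + 1) 0 = none) : cons (G 0) (G.translate 1) = G := by
  funext i k
  rcases i with _ | i
  · rfl
  · rcases k with _ | k
    · exact (hG i).symm
    · rfl

theorem blocked_cons_zero_iff :
    (cons r H).Blocked 0 (k + 1) ↔ (∃ j ≤ k, r j = some .b) ∨ ∃ i ≤ k, H i k = some .a := by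
  unfold Blocked
  apply or_congr
  · constructor
    · rintro ⟨j, -, hj, h⟩
      exact ⟨j, by omega, h⟩
    · rintro ⟨j, hj, h⟩
      exact ⟨j, by omega, by omega, h⟩
  · constructor
    · rintro ⟨_ | i, hj, hjk, h⟩
      · omega
      · exact ⟨i, by omega, h⟩
    · rintro ⟨i, hi, h⟩
      exact ⟨i + 1, by omega, by omega, h⟩

theorem isTableau_cons_iff : (cons r H).IsTableau (n + 1) ↔ H.IsTableau n ∧ IsTopRow n H r := by
  constructor
  · intro h
    refine ⟨h.translate, ⟨fun k hk => h.supportedIn 0 k (by omega), h.diag 0 (by omega),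
      fun k hk => (h.eq_none_iff 0 (k + 1) (by omega) (by omega)).trans blocked_cons_zero_iff,
      fun k => h.ne_x 0 k⟩⟩
  · rintro ⟨hH, hr⟩
    refine ⟨?_, ?_, ?_, ?_⟩
    · rintro (_ | i) k hk
      · exact hr.eq_none k (by omega)
      · rcases k with _ | k
        · rfl
        · exact hH.supportedIn i k (by omega)
    · rintro (_ | i) hi
      exacts [hr.head, hH.diag i (by omega)]
    · rintro (_ | i) (_ | k) hik hk
      · omega
      · exact (hr.eq_none_iff k (by omega)).trans blocked_cons_zero_iff.symm
      · omega
      · exact (hH.eq_none_iff i k (by omega) (by omega)).trans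
          (blocked_translate_iff (G := cons r H) 1)
    · rintro (_ | i) (_ | k)
      exacts [hr.ne_x 0, hr.ne_x _, nofun, hH.ne_x i k]

theorem IsTableau.isTopRow (hG : G.IsTableau (n + 1)) : IsTopRow n (G.translate 1) (G 0) := by
  rw [← cons_translate (fun i => hG.supportedIn (i + 1) 0 (by omega))] at hG
  exact (isTableau_cons_iff.1 hG).2

theorem IsTopRow.eq_of_eq_b (hr : IsTopRow n H r) {j k : ℕ} (hj : r j = some .b)
    (hk : r k = some .b) : j = k := by
  have key : ∀ j k, j < k → r j = some .b → r k ≠ some .b := by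
    rintro j (_ | k) hjk hj hk
    · omega
    · have hkn : k < n := by
        by_contra h
        rw [hr.eq_none _ (by omega)] at hk
        cases hk
      rw [(hr.eq_none_iff k hkn).2 (.inl ⟨j, by omega, hj⟩)] at hk
      cases hk
  rcases lt_trichotomy j k with h | h | h
  exacts [absurd hk (key _ _ h hj), h, absurd hj (key _ _ h hk)]

theorem IsTopRow.ext (hr : IsTopRow n H r) (hr' : IsTopRow n H r')
    (hb : ∀ k, r k = some .b ↔ r' k = some .b) : r = r' := by
  funext k
  refine MSym.option_eq_of_ne_x (hr.ne_x k) (hr'.ne_x k) ?_ (hb k)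
  rcases k with _ | k
  · rcases hr.head with h | h <;> rcases hr'.head with h' | h' <;> simp [h, h']
  by_cases hk : k < n
  · rw [hr.eq_none_iff k hk, hr'.eq_none_iff k hk]
    simp only [hb]
  · simp [hr.eq_none (k + 1) (by omega), hr'.eq_none (k + 1) (by omega)]

def AdmissibleBeta (n : ℕ) (H : Filling) (q : Option ℕ) : Prop :=
  ∀ c, q = some (c + 1) → c < n ∧ H.AlphaFree c

theorem admissibleBeta_none : AdmissibleBeta n H none := nofun

open Classical in
/-- The top row with its `β` in column `q` (no `β` at all if `q = none`) and an `α` in every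
unblocked box between the diagonal and that `β`. -/
noncomputable def topRow (n : ℕ) (H : Filling) (q : Option ℕ) : ℕ → Option MSym
  | 0 => if q = some 0 then some .b else some .a
  | k + 1 => if q = some (k + 1) then some .b
      else if k < n ∧ (∀ p ∈ q, k + 1 < p) ∧ H.AlphaFree k then some .a else none

theorem topRow_eq_b_iff {q : Option ℕ} : topRow n H q k = some .b ↔ q = some k := by
  rcases k with _ | k <;> simp only [topRow] <;> split_ifs <;> simp_all

theorem topRow_injective : Function.Injective (topRow n H) := by
  intro q q' h
  have hb : ∀ k, q = some k ↔ q' = some k := fun k => by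
    rw [← topRow_eq_b_iff (n := n) (H := H), h, topRow_eq_b_iff]
  rcases q with _ | p
  · rcases q' with _ | p'
    · rfl
    · simpa using (hb p').2 rfl
  · exact ((hb p).1 rfl).symm

theorem isTopRow_topRow {q : Option ℕ} (hq : AdmissibleBeta n H q) :
    IsTopRow n H (topRow n H q) where
  eq_none
    | 0, h => by omega
    | k + 1, h => by
      simp only [topRow]
      rw [if_neg fun hq' => by have := (hq k hq').1; omega, if_neg fun h' => by omega]
  head := by simp only [topRow]; split_ifs <;> simp
  ne_x k := by rcases k with _ | k <;> simp only [topRow] <;> split_ifs <;> simp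
  eq_none_iff k hk := by
    have hα : (∃ i ≤ k, H i k = some .a) ↔ ¬H.AlphaFree k := by simp [AlphaFree]
    simp only [topRow_eq_b_iff, hα]
    rw [topRow.eq_2]
    rcases q with _ | p
    · simp [hk]
    · rcases lt_trichotomy p (k + 1) with h | rfl | h
      · simp [h.ne, show p ≤ k by omega, show ¬k + 1 < p by omega]
      · simp [(hq k rfl).2]
      · simp [h.ne', hk, h, show ¬p ≤ k by omega]

theorem IsTopRow.exists_eq_topRow (hr : IsTopRow n H r) :
    ∃ q, AdmissibleBeta n H q ∧ topRow n H q = r := by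
  by_cases hβ : ∃ k, r k = some .b
  · obtain ⟨k, hk⟩ := hβ
    have hq : AdmissibleBeta n H (some k) := by
      rintro c ⟨⟩
      have hc : c < n := by
        by_contra h
        rw [hr.eq_none (c + 1) (by omega)] at hk
        cases hk
      refine ⟨hc, fun i hi ha => ?_⟩
      rw [(hr.eq_none_iff c hc).2 (.inr ⟨i, hi, ha⟩)] at hk
      cases hk
    refine ⟨some k, hq, (isTopRow_topRow hq).ext hr fun j => ?_⟩
    rw [topRow_eq_b_iff, Option.some_inj]
    exact ⟨fun h => h ▸ hk, hr.eq_of_eq_b hk⟩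
  · simp only [not_exists] at hβ
    exact ⟨none, admissibleBeta_none,
      (isTopRow_topRow admissibleBeta_none).ext hr fun j => by simp [topRow_eq_b_iff, hβ j]⟩

/-- Besides the two rows starting with `β` or containing no `β`, there is exactly one top row
for each `α`-free column of `H`, namely the one ending with a `β` above it. -/
theorem card_isTopRow :
    Nat.card {r // IsTopRow n H r} = Nat.card {c : Fin n // H.AlphaFree c} + 2 := by
  let pos : Option (Option {c : Fin n // H.AlphaFree c}) → Option ℕ :=
    Option.map fun o => o.elim 0 fun c => c.1 + 1
  have hpos : ∀ o, AdmissibleBeta n H (pos o) := by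
    rintro (_ | _ | ⟨c, hc⟩) c' h
    · cases h
    · simp [pos] at h
    · obtain rfl : (c : ℕ) = c' := by simpa [pos] using h
      exact ⟨c.2, hc⟩
  let f : Option (Option {c : Fin n // H.AlphaFree c}) → {r // IsTopRow n H r} :=
    fun o => ⟨topRow n H (pos o), isTopRow_topRow (hpos o)⟩
  have hf : f.Bijective := by
    refine ⟨fun o o' h => ?_, fun r => ?_⟩
    · have h' := topRow_injective (congrArg Subtype.val h)
      rcases o with _ | _ | ⟨c, hc⟩ <;> rcases o' with _ | _ | ⟨c', hc'⟩ <;>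
        simp_all [pos, Fin.val_inj]
    · obtain ⟨q, hq, hr⟩ := r.2.exists_eq_topRow
      rcases q with _ | _ | c
      · exact ⟨none, Subtype.ext hr⟩
      · exact ⟨some none, Subtype.ext hr⟩
      · exact ⟨some (some ⟨⟨c, (hq c rfl).1⟩, (hq c rfl).2⟩), Subtype.ext hr⟩
  rw [← Nat.card_eq_of_bijective f hf, Finite.card_option, Finite.card_option]

def consEquiv (n : ℕ) (P : (ℕ → Option MSym) → Prop) :
    {G : Tableau (n + 1) // P (G.1 0)} ≃ Σ H : Tableau n, {r // IsTopRow n H.1 r ∧ P r} where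
  toFun G := ⟨⟨_, G.1.2.translate⟩, G.1.1 0, G.1.2.isTopRow, G.2⟩
  invFun x := ⟨⟨cons x.2.1 x.1.1, isTableau_cons_iff.2 ⟨x.1.2, x.2.2.1⟩⟩, x.2.2.2⟩
  left_inv G := Subtype.ext <| Subtype.ext <|
    cons_translate fun i => G.1.2.supportedIn (i + 1) 0 (by omega)
  right_inv x := Sigma.subtype_ext (Subtype.ext (translate_cons (r := x.2.1))) rfl

theorem card_tableau_succ_subtype (P : (ℕ → Option MSym) → Prop) :
    Nat.card {G : Tableau (n + 1) // P (G.1 0)} =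
      ∑ H : Tableau n, Nat.card {r // IsTopRow n H.1 r ∧ P r} := by
  have : Finite (Σ H : Tableau n, {r // IsTopRow n H.1 r ∧ P r}) :=
    Finite.of_equiv _ (consEquiv n P)
  have := fun H : Tableau n => Finite.of_injective _
    (sigma_mk_injective (β := fun H : Tableau n => {r // IsTopRow n H.1 r ∧ P r}) (i := H))
  rw [Nat.card_congr (consEquiv n P), Nat.card_sigma]

theorem card_tableau_succ_eq_sum : Nat.card (Tableau (n + 1)) =
    ∑ H : Tableau n, (Nat.card {c : Fin n // H.1.AlphaFree c} + 2) := by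
  rw [← Nat.card_congr (Equiv.subtypeUnivEquiv fun _ => trivial),
    card_tableau_succ_subtype fun _ => True]
  simp only [and_true, card_isTopRow]

theorem card_tableau_succ_betaFree :
    Nat.card {G : Tableau (n + 1) // BetaFree (G.1 0)} = Nat.card (Tableau n) := by
  rw [card_tableau_succ_subtype, Nat.card_eq_fintype_card, Fintype.card_eq_sum_ones]
  refine Finset.sum_congr rfl fun H _ => Nat.card_eq_one_iff_unique.2 ⟨⟨fun r r' => ?_⟩, ?_⟩
  · exact Subtype.ext <| r.2.1.ext r'.2.1 fun k => by simp [r.2.2 k, r'.2.2 k]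
  · exact ⟨⟨_, isTopRow_topRow admissibleBeta_none, fun k => by simp [topRow_eq_b_iff]⟩⟩

theorem card_tableau_alphaFree {c : ℕ} (hc : c < n) :
    Nat.card {H : Tableau n // H.1.AlphaFree c} =
      Nat.card (Tableau c) * Nat.card (Tableau (n - 1 - c)) := by
  obtain ⟨k, rfl⟩ : ∃ k, n = c + 1 + k := ⟨n - 1 - c, by omega⟩
  rw [show c + 1 + k - 1 - c = k by omega]
  have htrunc : ∀ H : Filling, (H.truncate (c + 1)).AlphaFree c ↔ H.AlphaFree c := fun H => by
    simp [AlphaFree, truncate]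
  rw [← Nat.card_congr (Equiv.subtypeEquivRight fun H : Tableau (c + 1 + k) => htrunc H.1),
    Nat.card_congr (blockEquiv (c + 1) k (AlphaFree · c) fun _ hT => hT.exists_eq_b_of_alphaFree),
    Nat.card_prod, Nat.card_congr ((flipEquiv (c + 1)).subtypeEquiv
      (q := fun T => BetaFree (T.1 0)) fun T => betaFree_flip_iff.symm),
    card_tableau_succ_betaFree]

theorem card_tableau_succ (n : ℕ) : Nat.card (Tableau (n + 1)) = 2 * Nat.card (Tableau n) +
    ∑ c : Fin n, Nat.card (Tableau c) * Nat.card (Tableau (n - 1 - c)) := by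
  rw [card_tableau_succ_eq_sum, Finset.sum_add_distrib,
    sum_card_subtype_comm fun (H : Tableau n) (c : Fin n) => H.1.AlphaFree c]
  simp only [Finset.sum_const, Finset.card_univ, smul_eq_mul, ← Nat.card_eq_fintype_card]
  rw [add_comm, mul_comm]
  exact congrArg _ (Finset.sum_congr rfl fun c _ => card_tableau_alphaFree c.2)

theorem card_tableau (n : ℕ) : Nat.card (Tableau n) = catalan (n + 1) := by
  induction n using Nat.strong_induction_on with
  | _ n ih =>
    rcases n with _ | n
    · rw [card_tableau_zero, catalan_one]
    rw [card_tableau_succ, catalan_succ, Fin.sum_univ_succ, Fin.sum_univ_castSucc,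
      ih n (by omega)]
    have hmid : ∀ c : Fin n, Nat.card (Tableau c) * Nat.card (Tableau (n - 1 - c)) =
        catalan ((c.castSucc.succ : Fin (n + 2)) : ℕ) * catalan (n + 1 - c.castSucc.succ) := by
      intro c
      rw [ih c (by omega), ih _ (by omega)]
      simp only [Fin.val_succ, Fin.val_castSucc]
      congr 2
      omega
    simp only [hmid, Fin.val_zero, Fin.val_succ, Fin.val_last, Fin.val_castSucc, Nat.sub_zero,
      Nat.sub_self, catalan_zero, one_mul, mul_one]
    ring

def toStaircase (n : ℕ) (G : Filling) : Fin n → Fin n → Option MSym :=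
  fun i j => G i (n - 1 - j)

def ofStaircase (n : ℕ) (F : Fin n → Fin n → Option MSym) : Filling := fun i k =>
  if h : i ≤ k ∧ k < n then F ⟨i, by omega⟩ ⟨n - 1 - k, by omega⟩ else none

variable {F : Fin n → Fin n → Option MSym}

theorem supportedIn_ofStaircase : (ofStaircase n F).SupportedIn n :=
  fun _ _ _ => dif_neg (by omega)

theorem toStaircase_ofStaircase (hF : ∀ i j : Fin n, n ≤ i + j → F i j = none) :
    toStaircase n (ofStaircase n F) = F := by
  funext i j
  simp only [toStaircase, ofStaircase]
  split_ifs with h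
  · congr 1
    exact Fin.ext (by dsimp only; omega)
  · exact (hF i j (by omega)).symm

theorem ofStaircase_toStaircase (hG : G.SupportedIn n) : ofStaircase n (toStaircase n G) = G := by
  funext i k
  simp only [toStaircase, ofStaircase]
  split_ifs with h
  · congr 1
    omega
  · exact (hG i k (by omega)).symm

theorem diagRow_toStaircase (i : Fin n) : diagRow n (toStaircase n G) i = G i i := by
  simp only [diagRow, toStaircase]
  congr 1
  omega

theorem forcedEmpty_toStaircase_iff (hG : G.SupportedIn n) (i j : Fin n) :
    ForcedEmpty n (toStaircase n G) i j ↔ G.Blocked i (n - 1 - j) := by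
  unfold ForcedEmpty Blocked toStaircase
  constructor
  · rintro (⟨j', hj, h⟩ | ⟨i', hi, h⟩)
    · have hij : (i : ℕ) ≤ n - 1 - j' := by
        by_contra hc
        rw [hG _ _ (by omega)] at h
        cases h
      exact .inl ⟨n - 1 - j', hij, by have := j'.2; omega, h⟩
    · have hij : (i' : ℕ) ≤ n - 1 - j := by
        by_contra hc
        rw [hG _ _ (by omega)] at h
        cases h
      exact .inr ⟨i', hi, hij, h⟩
  · rintro (⟨k', h1, h2, h⟩ | ⟨i', h1, h2, h⟩)
    · refine .inl ⟨⟨n - 1 - k', by omega⟩, Fin.lt_def.2 (by simp only; omega), ?_⟩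
      simpa only [show n - 1 - (n - 1 - k') = k' by omega] using h
    · exact .inr ⟨⟨i', by omega⟩, h1, h⟩

theorem count_A_eq_zero_iff :
    (typeWord n F).count .A = 0 ↔ ∀ i, diagRow n F i = some .a ∨ diagRow n F i = some .b := by
  rw [List.count_eq_zero]
  simp only [typeWord, List.mem_ofFn, not_exists]
  refine forall_congr' fun i => ?_
  rcases diagRow n F i with _ | ⟨_ | _ | _⟩ <;> simp [symToLetter]

/-- An unforced box sees neither a `β` on the diagonal of its row nor an `α` on the diagonal of its
column, so only the first case of `IsMCT` can occur. -/
theorem isMCT_iff (hdiag : ∀ i, diagRow n F i = some .a ∨ diagRow n F i = some .b) :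
    IsMCT n F ↔ (∀ i j : Fin n, n ≤ (i : ℕ) + j → F i j = none) ∧
      ∀ i j : Fin n, (i : ℕ) + j < n - 1 →
        (ForcedEmpty n F i j → F i j = none) ∧
        (¬ForcedEmpty n F i j → F i j = some .a ∨ F i j = some .b) := by
  have hne : ∀ i, diagRow n F i ≠ none := fun i => by rcases hdiag i with h | h <;> simp [h]
  simp only [IsMCT, hne, ne_eq, not_false_eq_true, implies_true, true_and]
  refine and_congr_right fun _ => forall₂_congr fun i j => imp_congr_right fun hij =>
    and_congr_right fun _ => imp_congr_right fun hfe => ?_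
  have hrow : diagRow n F i = some .a := (hdiag i).resolve_right fun h =>
    hfe (.inl ⟨⟨n - 1 - i, by omega⟩, Fin.lt_def.2 (by simp only; omega), h⟩)
  have hcol : diagCol n F j = some .b := by
    have hcol : diagCol n F j = diagRow n F ⟨n - 1 - j, by omega⟩ := by
      simp only [diagCol, diagRow]
      congr 1
      exact Fin.ext (by dsimp only; omega)
    rw [hcol]
    exact (hdiag _).resolve_left fun h => hfe (.inr ⟨⟨n - 1 - j, by omega⟩,
      Fin.lt_def.2 (by simp only; omega), hcol.trans h⟩)
  rw [hrow, hcol]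

theorem isMCT_toStaircase_iff (hG : G.SupportedIn n) :
    IsMCT n (toStaircase n G) ∧ (typeWord n (toStaircase n G)).count .A = 0 ↔
      G.IsTableau n := by
  rw [count_A_eq_zero_iff]
  simp only [diagRow_toStaircase]
  constructor
  · rintro ⟨hmct, hdiag⟩
    rw [isMCT_iff (by simpa only [diagRow_toStaircase] using hdiag)] at hmct
    refine isTableau_of_cell hG (fun i hi => hdiag ⟨i, hi⟩) fun i k hik hk => ?_
    have := hmct.2 ⟨i, by omega⟩ ⟨n - 1 - k, by omega⟩ (by simp only; omega)
    simpa only [forcedEmpty_toStaircase_iff hG, toStaircase,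
      show n - 1 - (n - 1 - k) = k by omega] using this
  · intro hT
    have hdiag : ∀ i : Fin n, G i i = some .a ∨ G i i = some .b := fun i => hT.diag i i.2
    refine ⟨(isMCT_iff (by simpa only [diagRow_toStaircase] using hdiag)).2
      ⟨fun i j hij => hG _ _ (by omega), fun i j hij => ?_⟩, hdiag⟩
    rw [forcedEmpty_toStaircase_iff hG]
    exact hT.cell (by omega) (by omega)

def staircaseEquiv (n : ℕ) :
    {F : Fin n → Fin n → Option MSym // IsMCT n F ∧ (typeWord n F).count .A = 0} ≃
      Tableau n where
  toFun F := ⟨ofStaircase n F.1, (isMCT_toStaircase_iff supportedIn_ofStaircase).1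
    (by rw [toStaircase_ofStaircase F.2.1.1]; exact F.2)⟩
  invFun G := ⟨toStaircase n G.1, (isMCT_toStaircase_iff G.2.supportedIn).2 G.2⟩
  left_inv F := Subtype.ext (toStaircase_ofStaircase F.2.1.1)
  right_inv G := Subtype.ext (ofStaircase_toStaircase G.2.supportedIn)

end Filling

/-- The number of multi-Catalan tableaux of size `n` with no x on the diagonal is
the Catalan number C_{n+1} = (1/(n+2)) * binom(2n+2, n+1). -/
theorem multiCatalan_count_no_A (n : ℕ) :
    (Nat.card {F : Fin n → Fin n → Option MSym //
        IsMCT n F ∧ (typeWord n F).count Letter.A = 0} : ℚ) =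
      1 / (n + 2) * Nat.choose (2 * n + 2) (n + 1) := by
  have h := succ_mul_catalan_eq_centralBinom (n + 1)
  rw [Nat.centralBinom, show 2 * (n + 1) = 2 * n + 2 by ring] at h
  rw [Nat.card_congr (Filling.staircaseEquiv n), Filling.card_tableau, one_div, inv_mul_eq_div,
    eq_div_iff (by positivity), ← h]
  push_cast
  ring
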